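/- Let Θ be a nonempty compact subset of ℝ^p, let Y₁,…,Yₙ be points of ℝ^d, let f : ℝ^d × Θ → ℝ be such that θ ↦ f(y;θ) is continuous for each y, and let ĝ : ℝ^d → ℝ be any function. Then the minimum over all Borel probability measures G on Θ of the criterion (1/n) Σ_{i=1}^n ( ĝ(Y_i) − ∫_Θ f(Y_i;θ) dG(θ) )² exists, and there is a finitely supported probability measure Ĝ on Θ with at most n+1 atoms such that for every Borel probability measure G on Θ, (1/n) Σ_{i=1}^n ( ĝ(Y_i) − ∫_Θ f(Y_i;θ) dĜ(θ) )² ≤ (1/n) Σ_{i=1}^n ( ĝ(Y_i) − ∫_Θ f(Y_i;θ) dG(θ) )². -/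

import Mathlib

/-!
Write `F θ = (f(Y_i; θ))_i ∈ ℝⁿ`. The criterion only sees `G` through its mixture vector
`∫ F dG`, which lies in the convex hull of the compact set `F(Θ)`; in finite dimensions that hull
is compact, so the criterion attains its minimum on it, and by Carathéodory the minimiser is a
convex combination of at most `n + 1` points `F(θ_s)`.
-/

open MeasureTheory Module

section Caratheodory

variable {𝕜 E : Type*} [Field 𝕜] [LinearOrder 𝕜] [IsStrictOrderedRing 𝕜]
  [AddCommGroup E] [Module 𝕜 E] [FiniteDimensional 𝕜 E]

theorem exists_fin_stdSimplex_sum_smul_eq_of_mem_convexHull {s : Set E} {x : E}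
    (hx : x ∈ convexHull 𝕜 s) :
    ∃ m ≤ finrank 𝕜 E + 1, ∃ (w : Fin m → 𝕜) (z : Fin m → E),
      w ∈ stdSimplex 𝕜 (Fin m) ∧ (∀ i, z i ∈ s) ∧ ∑ i, w i • z i = x := by
  obtain ⟨ι, _, z, w, hzs, hind, hw0, hw1, rfl⟩ := eq_pos_convex_span_of_mem_convexHull hx
  let e := Fintype.equivFin ι
  refine ⟨Fintype.card ι, hind.card_le_finrank_succ.trans (by gcongr; exact Submodule.finrank_le _),
    w ∘ e.symm, z ∘ e.symm, ⟨fun i => (hw0 _).le, ?_⟩, fun i => hzs ⟨_, rfl⟩, ?_⟩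
  · simpa only [Function.comp_apply, e.symm.sum_comp] using hw1
  · exact e.symm.sum_comp fun i => w i • z i

end Caratheodory

theorem IsCompact.convexHull {E : Type*} [NormedAddCommGroup E] [NormedSpace ℝ E]
    [FiniteDimensional ℝ E] {K : Set E} (hK : IsCompact K) : IsCompact (convexHull ℝ K) := by
  let combos (m : ℕ) : Set E :=
    (fun q : (Fin m → ℝ) × (Fin m → E) => ∑ i, q.1 i • q.2 i) ''
      (stdSimplex ℝ (Fin m) ×ˢ Set.univ.pi fun _ => K)
  have hcombos : _root_.convexHull ℝ K = ⋃ m : Fin (finrank ℝ E + 2), combos m := by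
    refine subset_antisymm (fun x hx => ?_) (Set.iUnion_subset fun m => ?_)
    · obtain ⟨m, hm, w, z, hw, hz, rfl⟩ := exists_fin_stdSimplex_sum_smul_eq_of_mem_convexHull hx
      exact Set.mem_iUnion.2 ⟨⟨m, by omega⟩, (w, z), ⟨hw, fun i _ => hz i⟩, rfl⟩
    · rintro _ ⟨⟨w, z⟩, ⟨hw, hz⟩, rfl⟩
      exact (convex_convexHull ℝ K).sum_mem (fun i _ => hw.1 i) hw.2
        fun i _ => subset_convexHull ℝ K (hz i trivial)
  rw [hcombos]
  refine isCompact_iUnion fun m => ((isCompact_stdSimplex _ _).prod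
    (isCompact_univ_pi fun _ => hK)).image ?_
  fun_prop

/-- The least-squares projection criterion over all Borel probability
measures on a compact `Θ` attains its minimum at a finitely supported mixing
distribution with at most `n+1` atoms. -/
theorem stmt_1 {p d n : ℕ} (Θ : Set (EuclideanSpace ℝ (Fin p)))
    (hne : Θ.Nonempty) (hcomp : IsCompact Θ)
    (Y : Fin n → EuclideanSpace ℝ (Fin d))
    (f : EuclideanSpace ℝ (Fin d) → EuclideanSpace ℝ (Fin p) → ℝ)
    (hf : ∀ y, ContinuousOn (f y) Θ)
    (g : EuclideanSpace ℝ (Fin d) → ℝ) :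
    ∃ (S : ℕ) (θs : Fin S → EuclideanSpace ℝ (Fin p)) (π : Fin S → ℝ),
      S ≤ n + 1 ∧ (∀ s, θs s ∈ Θ) ∧ (∀ s, 0 ≤ π s) ∧ (∑ s, π s = 1) ∧
      ∀ G : Measure (EuclideanSpace ℝ (Fin p)),
        IsProbabilityMeasure G → G Θᶜ = 0 →
        (1 / (n : ℝ)) * ∑ i, (g (Y i) - ∑ s, π s * f (Y i) (θs s)) ^ 2 ≤
          (1 / (n : ℝ)) * ∑ i, (g (Y i) - ∫ θ, f (Y i) θ ∂G) ^ 2 := by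
  let F : EuclideanSpace ℝ (Fin p) → Fin n → ℝ := fun θ i => f (Y i) θ
  have hF : ContinuousOn F Θ := continuousOn_pi.2 fun i => hf (Y i)
  let crit : (Fin n → ℝ) → ℝ := fun v => ∑ i, (g (Y i) - v i) ^ 2
  obtain ⟨v, hv, hvmin⟩ := (hcomp.image_of_continuousOn hF).convexHull.exists_isMinOn
    ((hne.image F).mono (subset_convexHull ℝ _)) (by fun_prop : Continuous crit).continuousOn
  obtain ⟨S, hS, π, z, hπ, hz, rfl⟩ := exists_fin_stdSimplex_sum_smul_eq_of_mem_convexHull hv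
  choose θs hθs hFθ using hz
  refine ⟨S, θs, π, by simpa using hS, hθs, hπ.1, hπ.2, fun G _ hG => ?_⟩
  have hΘ : ∀ᵐ θ ∂G, θ ∈ Θ := ae_iff.2 hG
  have hFint : Integrable F G := by
    rw [← Measure.restrict_eq_self_of_ae_mem hΘ]
    exact hF.integrableOn_compact hcomp
  have hmix : ∫ θ, F θ ∂G ∈ convexHull ℝ (F '' Θ) :=
    (convex_convexHull ℝ _).integral_mem (hcomp.image_of_continuousOn hF).convexHull.isClosed
      (hΘ.mono fun θ hθ => subset_convexHull ℝ _ ⟨θ, hθ, rfl⟩) hFint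
  have key : crit (∑ s, π s • z s) ≤ crit (∫ θ, F θ ∂G) := hvmin hmix
  simp only [crit, eval_integral (fun i => hFint.eval i), Finset.sum_apply, Pi.smul_apply,
    smul_eq_mul, ← hFθ] at key
  gcongr
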